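/- The integers 8, 12 and 24 are monomially irreducible. -/

import Mathlib

/-!
For a constant tuple, `M (k, …, k) = mat k ^ n = [[Kₙ, -Kₙ₋₁], [Kₙ₋₁, Kₙ - k Kₙ₋₁]]`, so
`(k, …, k)` is a solution iff `Kₙ₋₁ = 0` and `Kₙ = ±1`. If it were `a ⊕ b` up to equivalence,
the solution `b` would have the shape `(x, k, …, k, y)` with `1 ≤ j ≤ n - 3` middle entries, and
the lower right entry of `M b = mat y * mat k ^ j * mat x` is `-Kⱼ`. Hence the minimal
`k`-monomial solution is irreducible as soon as `Kⱼ ≠ ±1` for `1 ≤ j ≤ n - 3`; for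
`N = 8, 12, 24` this, and the minimality of `n`, is a finite computation.
-/

namespace Monomial

/-- The elementary matrix `[[a, -1], [1, 0]]` over `ZMod N`. -/
def mat {N : ℕ} (a : ZMod N) : Matrix (Fin 2) (Fin 2) (ZMod N) := !![a, -1; 1, 0]

/-- `M [a₁, …, aₙ] = mat aₙ * ⋯ * mat a₁`. -/
def M {N : ℕ} (l : List (ZMod N)) : Matrix (Fin 2) (Fin 2) (ZMod N) :=
  (l.reverse.map mat).prod

/-- A tuple is a solution of (E_N) if the associated matrix is `±Id`. -/
def IsSolution {N : ℕ} (l : List (ZMod N)) : Prop := M l = 1 ∨ M l = -1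

/-- The sum `(a₁,…,aₙ) ⊕ (b₁,…,bₘ) = (a₁+bₘ, a₂,…,aₙ₋₁, aₙ+b₁, b₂,…,bₘ₋₁)`. -/
def osum {N : ℕ} (u v : List (ZMod N)) : List (ZMod N) :=
  (u.headI + v.getLastD 0) ::
    ((u.drop 1).dropLast ++ (u.getLastD 0 + v.headI) :: (v.drop 1).dropLast)

/-- Equivalence: `v` is a cyclic permutation of `u` or of the reversal of `u`. -/
def CyclicEquiv {N : ℕ} (u v : List (ZMod N)) : Prop :=
  (∃ i, v = u.rotate i) ∨ (∃ i, v = u.reverse.rotate i)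

/-- A tuple is reducible if, up to equivalence, it is a sum of an `m`-tuple (`m ≥ 3`)
with a solution of size `l ≥ 3`. -/
def Reducible {N : ℕ} (c : List (ZMod N)) : Prop :=
  ∃ a b : List (ZMod N), 3 ≤ a.length ∧ 3 ≤ b.length ∧ IsSolution b ∧
    CyclicEquiv c (osum a b)

/-- An irreducible solution: a solution which is not reducible (and `(0,0)` is
not considered irreducible). -/
def IrreducibleSol {N : ℕ} (c : List (ZMod N)) : Prop :=
  IsSolution c ∧ ¬ Reducible c ∧ c ≠ [0, 0]

/-- The size of the `k`-monomial minimal solution of (E_N): the least `n > 0` such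
that the constant `n`-tuple `(k, …, k)` is a solution. -/
noncomputable def monomialMinimalSize (N : ℕ) (k : ZMod N) : ℕ :=
  sInf {n | 0 < n ∧ IsSolution (List.replicate n k)}

/-- `N` is monomially irreducible if, for every `k ≠ 0`, the `k`-monomial minimal
solution of (E_N) is irreducible. -/
def MonomiallyIrreducible (N : ℕ) : Prop :=
  ∀ k : ZMod N, k ≠ 0 → IrreducibleSol (List.replicate (monomialMinimalSize N k) k)

/-- The continuant `Kₙ(x, …, x)` at a constant tuple: `K₀ = 1`, `K₁ = x`,
`Kₙ₊₂ = x * Kₙ₊₁ - Kₙ`. -/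
def K {N : ℕ} (x : ZMod N) : ℕ → ZMod N
  | 0 => 1
  | 1 => x
  | n + 2 => x * K x (n + 1) - K x n

def Kprev {N : ℕ} (x : ZMod N) : ℕ → ZMod N
  | 0 => 0
  | n + 1 => K x n

section

variable {N : ℕ}

@[simp] lemma Kprev_zero (x : ZMod N) : Kprev x 0 = 0 := rfl

@[simp] lemma Kprev_succ (x : ZMod N) (n : ℕ) : Kprev x (n + 1) = K x n := rfl

lemma K_succ (x : ZMod N) : ∀ n, K x (n + 1) = x * K x n - Kprev x n
  | 0 => by simp [K]
  | _ + 1 => rfl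

lemma mat_pow (x : ZMod N) (n : ℕ) :
    mat x ^ n = !![K x n, -Kprev x n; Kprev x n, K x n - x * Kprev x n] := by
  induction n with
  | zero => simp [K, Matrix.one_fin_two]
  | succ n ih =>
    rw [pow_succ', ih, mat, Matrix.mul_fin_two, K_succ, Kprev_succ]
    ext i j
    fin_cases i <;> fin_cases j <;> simp <;> ring

lemma M_singleton (x : ZMod N) : M [x] = mat x := by simp [M]

lemma M_append (u v : List (ZMod N)) : M (u ++ v) = M v * M u := by
  simp [M]

lemma M_replicate (k : ZMod N) (n : ℕ) : M (List.replicate n k) = mat k ^ n := by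
  simp [M]

lemma isSolution_replicate_iff (k : ZMod N) (n : ℕ) :
    IsSolution (List.replicate n k) ↔ Kprev k n = 0 ∧ (K k n = 1 ∨ K k n = -1) := by
  simp only [IsSolution, M_replicate, mat_pow, Matrix.one_fin_two, ← Matrix.ext_iff,
    Fin.forall_fin_two]
  by_cases h0 : Kprev k n = 0 <;> simp [h0]

lemma M_cons_replicate_append_apply_one_one (x y k : ZMod N) (j : ℕ) :
    M (x :: List.replicate j k ++ [y]) 1 1 = -K k j := by
  rw [List.cons_append, ← List.singleton_append, M_append, M_append, M_singleton, M_singleton,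
    M_replicate, mat_pow]
  simp [mat, Matrix.mul_apply, Fin.sum_univ_two]

lemma length_osum {a b : List (ZMod N)} (ha : 2 ≤ a.length) (hb : 2 ≤ b.length) :
    (osum a b).length = a.length + b.length - 2 := by
  simp [osum]
  omega

lemma eq_replicate_of_cyclicEquiv {k : ZMod N} {n : ℕ} {v : List (ZMod N)}
    (h : CyclicEquiv (List.replicate n k) v) : v = List.replicate n k := by
  rcases h with ⟨i, rfl⟩ | ⟨i, rfl⟩ <;> simp

lemma exists_eq_cons_replicate_append_of_osum_eq_replicate {a b : List (ZMod N)} {k : ZMod N}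
    {n : ℕ} (h : osum a b = List.replicate n k) (hb : 2 ≤ b.length) :
    ∃ x y, b = x :: List.replicate (b.length - 2) k ++ [y] := by
  obtain _ | ⟨x, t⟩ := b
  · simp at hb
  obtain rfl | ⟨m, y, rfl⟩ := t.eq_nil_or_concat
  · simp at hb
  refine ⟨x, y, ?_⟩
  rw [List.concat_eq_append] at h ⊢
  have hm : ∀ z ∈ m, z = k := fun z hz =>
    List.eq_of_mem_replicate (h ▸ (by simp [osum, hz] : z ∈ osum a (x :: (m ++ [y]))))
  simpa using List.eq_replicate_iff.mpr ⟨rfl, hm⟩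

lemma exists_K_eq_one_or_neg_one_of_reducible_replicate {k : ZMod N} {n : ℕ}
    (h : Reducible (List.replicate n k)) :
    ∃ j, 0 < j ∧ j + 3 ≤ n ∧ (K k j = 1 ∨ K k j = -1) := by
  obtain ⟨a, b, ha, hb, hsol, hequiv⟩ := h
  have hab := eq_replicate_of_cyclicEquiv hequiv
  have hn : n = a.length + b.length - 2 := by
    rw [← List.length_replicate (n := n) (a := k), ← hab, length_osum] <;> omega
  obtain ⟨x, y, hxy⟩ := exists_eq_cons_replicate_append_of_osum_eq_replicate hab (by omega)
  have h11 := M_cons_replicate_append_apply_one_one x y k (b.length - 2)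
  rw [← hxy] at h11
  refine ⟨b.length - 2, by omega, by omega, ?_⟩
  rcases hsol with hM | hM <;> rw [hM] at h11 <;> simp at h11
  · exact .inr (neg_eq_iff_eq_neg.mp h11.symm)
  · exact .inl h11.symm

lemma irreducibleSol_replicate {k : ZMod N} {n : ℕ} (hk : k ≠ 0)
    (hsol : IsSolution (List.replicate n k))
    (hK : ∀ j < n - 2, 0 < j → K k j ≠ 1 ∧ K k j ≠ -1) :
    IrreducibleSol (List.replicate n k) := by
  refine ⟨hsol, fun hred => ?_, fun h => hk ?_⟩
  · obtain ⟨j, hj, hjn, hKj⟩ := exists_K_eq_one_or_neg_one_of_reducible_replicate hred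
    have := hK j (by omega) hj
    tauto
  · have h0 : (0 : ZMod N) ∈ List.replicate n k := h ▸ List.mem_cons_self
    exact (List.eq_of_mem_replicate h0).symm

lemma monomialMinimalSize_eq {k : ZMod N} {n : ℕ} (hn : 0 < n)
    (hsol : IsSolution (List.replicate n k))
    (hmin : ∀ m < n, 0 < m → ¬ IsSolution (List.replicate m k)) :
    monomialMinimalSize N k = n :=
  IsLeast.csInf_eq ⟨⟨hn, hsol⟩, fun m ⟨hm, hmsol⟩ => not_lt.mp fun hlt => hmin m hlt hm hmsol⟩

/-- The bound `B` makes the hypothesis decidable once `N` is a numeral. -/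
lemma monomiallyIrreducible_of_forall_exists_lt (B : ℕ)
    (h : ∀ k : ZMod N, k ≠ 0 → ∃ n < B, 0 < n ∧ IsSolution (List.replicate n k) ∧
      (∀ m < n, 0 < m → ¬ IsSolution (List.replicate m k)) ∧
      ∀ j < n - 2, 0 < j → K k j ≠ 1 ∧ K k j ≠ -1) :
    MonomiallyIrreducible N := by
  intro k hk
  obtain ⟨n, -, hn, hsol, hmin, hK⟩ := h k hk
  rw [monomialMinimalSize_eq hn hsol hmin]
  exact irreducibleSol_replicate hk hsol hK

end

theorem stmt5 : MonomiallyIrreducible 8 ∧ MonomiallyIrreducible 12 ∧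
    MonomiallyIrreducible 24 := by
  refine ⟨?_, ?_, ?_⟩ <;> apply monomiallyIrreducible_of_forall_exists_lt 25 <;>
    simp only [isSolution_replicate_iff] <;> decide

end Monomial
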